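/- arXiv:math/0202203 — 4 statements merged into one kernel-verified Lean document; each statement's English description precedes it below -/
import Mathlib

section
/- Let ρ > 1. For every ε > 0 there exists M > 0 such that every point z = re^{iφ} with r ≥ M, 0 < φ < π/(2ρ), lying on the generalized Szegő curve (i.e. satisfying r^ρ cos(ρφ) − 1 − ρ log r = 0) is at distance less than ε from the ray {te^{iπ/(2ρ)} : t ≥ 0}; in other words, the branch of the curve S(ρ) ∩ {|z| ≥ 1} in the upper half plane has the ray arg z = π/(2ρ) as an asymptote (and by symmetry, the lower branch has asymptote arg z = −π/(2ρ)). -/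
/-!
Write `ψ = π / (2ρ)` and `δ = ψ - φ`. On the curve, `cos (ρφ) = (1 + ρ log r) / r ^ ρ`, and
`cos (ρφ) = sin (ρδ) ≥ (2/π) ρδ` by Jordan's inequality, so `r δ ≤ ψ r (1 + ρ log r) / r ^ ρ`,
which tends to `0` because `ρ > 1`. The point `r e^{iψ}` of the ray is within `r δ` of `r e^{iφ}`.
-/

open Complex Real Filter Topology

theorem Complex.norm_exp_I_mul_ofReal_sub_exp_I_mul_ofReal_le (x y : ℝ) :
    ‖exp (I * x) - exp (I * y)‖ ≤ |x - y| :=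
  calc ‖exp (I * x) - exp (I * y)‖ = ‖exp (I * y) * (exp (I * ↑(x - y)) - 1)‖ := by
        rw [mul_sub, ← Complex.exp_add]; push_cast; ring_nf
    _ = ‖exp (I * ↑(x - y)) - 1‖ := by rw [norm_mul, norm_exp_I_mul_ofReal, one_mul]
    _ ≤ |x - y| := norm_exp_I_mul_ofReal_sub_one_le

theorem Real.pi_div_two_mul_sub_le_mul_cos {ρ φ : ℝ} (hρ : 0 < ρ) (hφ : 0 ≤ φ)
    (hφψ : φ ≤ π / (2 * ρ)) : π / (2 * ρ) - φ ≤ π / (2 * ρ) * Real.cos (ρ * φ) := by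
  have hρφ : ρ * φ ≤ π / 2 := by
    calc ρ * φ ≤ ρ * (π / (2 * ρ)) := mul_le_mul_of_nonneg_left hφψ hρ.le
      _ = π / 2 := by field_simp
  have hjordan : 2 / π * (π / 2 - ρ * φ) ≤ Real.cos (ρ * φ) := by
    rw [← Real.sin_pi_div_two_sub]
    exact Real.mul_le_sin (by linarith) (by nlinarith)
  calc π / (2 * ρ) - φ = π / (2 * ρ) * (2 / π * (π / 2 - ρ * φ)) := by field_simp
    _ ≤ π / (2 * ρ) * Real.cos (ρ * φ) := by gcongr

theorem tendsto_mul_one_add_mul_log_div_rpow_atTop {ρ : ℝ} (hρ : 1 < ρ) (c : ℝ) :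
    Tendsto (fun r : ℝ => r * (1 + c * Real.log r) / r ^ ρ) atTop (𝓝 0) := by
  have hρ' : 0 < ρ - 1 := by linarith
  have hlittle : (fun r : ℝ => 1 + c * Real.log r) =o[atTop] fun r => r ^ (ρ - 1) :=
    ((Asymptotics.isLittleO_one_left_iff ℝ).2
        (tendsto_norm_atTop_atTop.comp (tendsto_rpow_atTop hρ'))).add
      ((isLittleO_log_rpow_atTop hρ').const_mul_left c)
  refine hlittle.tendsto_div_nhds_zero.congr' ?_
  filter_upwards [eventually_gt_atTop 0] with r hr
  rw [Real.rpow_sub hr, Real.rpow_one]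
  field_simp

theorem stmt11 (ρ : ℝ) (hρ : 1 < ρ) (ε : ℝ) (hε : 0 < ε) :
    ∃ M : ℝ, 0 < M ∧ ∀ r φ : ℝ, M ≤ r → 0 < φ → φ < π / (2 * ρ) →
      r ^ ρ * Real.cos (ρ * φ) - 1 - ρ * Real.log r = 0 →
      ∃ t : ℝ, 0 ≤ t ∧
        ‖(r : ℂ) * Complex.exp (Complex.I * (φ : ℂ)) -
          (t : ℂ) * Complex.exp (Complex.I * ((π / (2 * ρ) : ℝ) : ℂ))‖ < ε := by
  set ψ := π / (2 * ρ)
  have hsmall : ∀ᶠ r in atTop, ψ * (r * (1 + ρ * Real.log r) / r ^ ρ) < ε := by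
    have := (tendsto_mul_one_add_mul_log_div_rpow_atTop hρ ρ).const_mul ψ
    rw [mul_zero] at this
    exact this.eventually (gt_mem_nhds hε)
  obtain ⟨M, hM⟩ := (hsmall.and (eventually_gt_atTop 0)).exists_forall_of_atTop
  refine ⟨max M 1, by positivity, fun r φ hr hφ hφψ hcurve => ⟨r, ?_⟩⟩
  obtain ⟨hlt, hr⟩ := hM r (le_of_max_le_left hr)
  have hcos : Real.cos (ρ * φ) = (1 + ρ * Real.log r) / r ^ ρ := by
    rw [eq_div_iff (Real.rpow_pos_of_pos hr ρ).ne']; linarith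
  refine ⟨hr.le, ?_⟩
  calc ‖(r : ℂ) * exp (I * φ) - r * exp (I * ψ)‖ = r * ‖exp (I * φ) - exp (I * ψ)‖ := by
        rw [← mul_sub, norm_mul, norm_real, norm_of_nonneg hr.le]
    _ ≤ r * |φ - ψ| := by gcongr; exact norm_exp_I_mul_ofReal_sub_exp_I_mul_ofReal_le φ ψ
    _ = r * (ψ - φ) := by rw [abs_sub_comm, abs_of_pos (sub_pos.2 hφψ)]
    _ ≤ r * (ψ * Real.cos (ρ * φ)) := by
        gcongr; exact pi_div_two_mul_sub_le_mul_cos (by linarith) hφ.le hφψ.le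
    _ = ψ * (r * (1 + ρ * Real.log r) / r ^ ρ) := by rw [hcos]; ring
    _ < ε := hlt
end

section
/- Let ρ > 1, δ₂ > 0, δ₃ > 0, h > 0, and define J₁'(n,z) = e^{R_n^ρ z^ρ}·Γ(1+n/ρ)/(R_n^n z^n). Then there exist a constant C₁ > 0 and N such that for all n ≥ N and all z in Ω₁ ∪ Ω₅, where Ω₁ = {z = re^{iφ} : 0 < r ≤ 1, |z−1| ≥ δ₂, |φ| ≤ π/(2ρ) − δ₃, r^ρ cos(ρφ) − 1 − ρ log r ≥ 0} and Ω₅ = {z = re^{iφ} : r ≥ 1, |φ| ≤ π/(2ρ) − δ₃, r^ρ cos(ρφ) − 1 − ρ log r ≥ h}, one has |J₁'(n,z)| ≥ C₁ (n/ρ)^{1/2}. -/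
/-!
Write `x = R_n^ρ`, `m = n/ρ` and `z = r e^{iφ}`. Then
`|J₁'(n,z)| = exp (x r^ρ cos ρφ - n log r) Γ(1+m) / x^m`.
Wendel's inequalities (log-convexity of `Γ`) give `n ≤ ρ x ≤ n + ρ - 1`; together with
`cos ρφ ≥ 0` and `r^ρ cos ρφ - ρ log r ≥ 1` on `Ω₁ ∪ Ω₅`, this bounds the exponent below by
`x - 1`. As `x^m ≤ e^{x-m} m^m`, the modulus is at least `e^{m-1} Γ(1+m) / m^m`, and Stirling's
lower bound for `⌊m⌋!`, moved to real `m` by Wendel's inequality, gives `Γ(1+m) ≥ √m (m/e)^m`.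
-/

open Complex Real Filter Topology

noncomputable def Rn (ρ : ℝ) (n : ℕ) : ℝ :=
  Real.Gamma (1 + (n : ℝ) / ρ) / Real.Gamma (1 + ((n : ℝ) - 1) / ρ)


noncomputable def J1 (ρ : ℝ) (n : ℕ) (z : ℂ) : ℂ :=
  Complex.exp (((Rn ρ n ^ ρ : ℝ) : ℂ) * z ^ (ρ : ℂ)) * (Real.Gamma (1 + (n : ℝ) / ρ) : ℂ) /
    ((Rn ρ n : ℂ) ^ n * z ^ n)

namespace Real

theorem Gamma_add_le_rpow_mul_Gamma {x s : ℝ} (hx : 0 < x) (hs0 : 0 ≤ s) (hs1 : s ≤ 1) :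
    Gamma (x + s) ≤ x ^ s * Gamma x := by
  rcases hs0.eq_or_lt with rfl | hs0
  · simp
  rcases hs1.eq_or_lt with rfl | hs1
  · rw [rpow_one, Gamma_add_one hx.ne']
  have h := Gamma_mul_add_mul_le_rpow_Gamma_mul_rpow_Gamma hx (by linarith : 0 < x + 1)
    (sub_pos.2 hs1) hs0 (by ring)
  rwa [show (1 - s) * x + s * (x + 1) = x + s by ring, Gamma_add_one hx.ne',
    mul_rpow hx.le (Gamma_pos_of_pos hx).le, ← mul_assoc, mul_comm _ (x ^ s), mul_assoc,
    ← rpow_add (Gamma_pos_of_pos hx), sub_add_cancel, rpow_one] at h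

theorem rpow_mul_Gamma_add_one_sub_le {x s : ℝ} (hx : 0 < x) (hs0 : 0 ≤ s) (hs1 : s ≤ 1) :
    x ^ s * Gamma (x + 1 - s) ≤ Gamma (x + 1) := by
  rcases hs0.eq_or_lt with rfl | hs0
  · simp
  rcases hs1.eq_or_lt with rfl | hs1
  · rw [rpow_one, add_sub_cancel_right, Gamma_add_one hx.ne']
  have h := Gamma_mul_add_mul_le_rpow_Gamma_mul_rpow_Gamma hx (by linarith : 0 < x + 1)
    hs0 (sub_pos.2 hs1) (by ring)
  rw [show s * x + (1 - s) * (x + 1) = x + 1 - s by ring, Gamma_add_one hx.ne',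
    mul_rpow hx.le (Gamma_pos_of_pos hx).le, mul_left_comm, ← rpow_add (Gamma_pos_of_pos hx),
    add_sub_cancel, rpow_one] at h
  calc x ^ s * Gamma (x + 1 - s) ≤ x ^ s * (x ^ (1 - s) * Gamma x) := by gcongr
    _ = Gamma (x + 1) := by
      rw [← mul_assoc, ← rpow_add hx, add_sub_cancel, rpow_one, Gamma_add_one hx.ne']

theorem rpow_le_exp_sub_mul_rpow {x m : ℝ} (hx : 0 ≤ x) (hm : 0 < m) :
    x ^ m ≤ exp (x - m) * m ^ m := by
  have hxm : x / m ≤ exp (x / m - 1) := by linarith [add_one_le_exp (x / m - 1)]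
  calc x ^ m = (x / m) ^ m * m ^ m := by
        rw [div_rpow hx hm.le, div_mul_cancel₀ _ (rpow_pos_of_pos hm m).ne']
    _ ≤ exp (x / m - 1) ^ m * m ^ m := by gcongr
    _ = exp (x - m) * m ^ m := by
        rw [← exp_mul, sub_mul, div_mul_cancel₀ _ hm.ne', one_mul]

theorem sqrt_mul_rpow_self_le_exp_mul_Gamma {m : ℝ} (hm : 1 ≤ m) :
    √m * m ^ m ≤ exp m * Gamma (1 + m) := by
  have hm0 : 0 < m := by linarith
  set k := ⌊m⌋₊
  have hkm : (k : ℝ) ≤ m := Nat.floor_le hm0.le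
  have hmk : m < k + 1 := Nat.lt_floor_add_one m
  have hk : (1 : ℝ) ≤ k := by exact_mod_cast Nat.le_floor (by exact_mod_cast hm)
  have hk0 : (0 : ℝ) < k := by linarith
  have hfrac : m ^ (m - k) * k.factorial ≤ Gamma (1 + m) := by
    have h := rpow_mul_Gamma_add_one_sub_le hm0 (sub_nonneg.2 hkm) (by linarith)
    rwa [show m + 1 - (m - k) = k + 1 by ring, Gamma_nat_eq_factorial, add_comm] at h
  have hpow : m ^ k ≤ exp (m - k) * k ^ k := by
    simpa only [rpow_natCast] using rpow_le_exp_sub_mul_rpow hm0.le (m := k) hk0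
  have hsqrt : √m ≤ √(2 * π * k) := sqrt_le_sqrt (by nlinarith [pi_gt_three])
  calc √m * m ^ m = √m * m ^ k * m ^ (m - k) := by
        rw [mul_assoc, ← rpow_natCast, ← rpow_add hm0, add_sub_cancel]
    _ ≤ √(2 * π * k) * (exp (m - k) * k ^ k) * m ^ (m - k) := by gcongr
    _ = exp m * (m ^ (m - k) * (√(2 * π * k) * (k / exp 1) ^ k)) := by
        rw [div_pow, exp_one_pow, exp_sub]; field_simp
    _ ≤ exp m * (m ^ (m - k) * k.factorial) := by gcongr; exact Stirling.le_factorial_stirling k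
    _ ≤ exp m * Gamma (1 + m) := by gcongr

theorem cos_mul_nonneg_of_abs_le {ρ φ : ℝ} (hρ : 0 < ρ) (hφ : |φ| ≤ π / (2 * ρ)) :
    0 ≤ cos (ρ * φ) := by
  have h : |ρ * φ| ≤ π / 2 := by
    rw [abs_mul, abs_of_pos hρ]
    calc ρ * |φ| ≤ ρ * (π / (2 * ρ)) := by gcongr
      _ = π / 2 := by field_simp
  exact cos_nonneg_of_mem_Icc (abs_le.1 h)

theorem inv_exp_one_mul_sqrt_le_exp_mul_Gamma_div_rpow {m x E : ℝ} (hm : 1 ≤ m) (hx : 0 < x)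
    (hE : x - 1 ≤ E) :
    (exp 1)⁻¹ * √m ≤ exp E * Gamma (1 + m) / x ^ m := by
  have hm0 : 0 < m := by linarith
  rw [le_div_iff₀ (rpow_pos_of_pos hx m)]
  calc (exp 1)⁻¹ * √m * x ^ m ≤ (exp 1)⁻¹ * √m * (exp (x - m) * m ^ m) := by
        gcongr; exact rpow_le_exp_sub_mul_rpow hx.le hm0
    _ = exp (x - 1 - m) * (√m * m ^ m) := by
        rw [exp_sub, exp_sub, exp_sub]; field_simp
    _ ≤ exp (x - 1 - m) * (exp m * Gamma (1 + m)) :=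
        mul_le_mul_of_nonneg_left (sqrt_mul_rpow_self_le_exp_mul_Gamma hm) (exp_pos _).le
    _ = exp (x - 1) * Gamma (1 + m) := by rw [← mul_assoc, ← exp_add, sub_add_cancel]
    _ ≤ exp E * Gamma (1 + m) := by gcongr

end Real

theorem sub_one_le_mul_sub_mul {ρ x n c ℓ : ℝ} (hρ : 1 ≤ ρ) (hn : 0 ≤ n) (hxn : n ≤ ρ * x)
    (hxn' : ρ * x ≤ n + ρ - 1) (hc : 0 ≤ c) (hg : 1 ≤ c - ρ * ℓ) : x - 1 ≤ x * c - n * ℓ := by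
  rcases le_total 0 ℓ with hℓ | hℓ
  · nlinarith [mul_le_mul_of_nonneg_right hxn hℓ]
  rcases le_total 0 (ρ * x - ρ + 1) with hx | hx
  -- multiply out `(ρ x - ρ + 1)(c - ρ ℓ - 1) ≥ 0` and use `n ≥ ρ x - ρ + 1`
  · nlinarith [mul_nonneg (by linarith : 0 ≤ n - (ρ * x - ρ + 1)) (neg_nonneg.2 hℓ),
      mul_nonneg hx (by linarith : 0 ≤ c - ρ * ℓ - 1), mul_nonneg (by linarith : 0 ≤ ρ - 1) hc]
  · nlinarith [mul_nonneg hn (neg_nonneg.2 hℓ), mul_nonneg (by nlinarith : 0 ≤ x) hc]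

theorem Rn_eq_Gamma_div_Gamma (ρ : ℝ) (n : ℕ) :
    Rn ρ n = Real.Gamma (n / ρ + 1) / Real.Gamma (n / ρ + 1 - ρ⁻¹) := by
  rw [Rn]
  congr 2 <;> ring

theorem Rn_pos {ρ : ℝ} (hρ : 0 < ρ) {n : ℕ} (hn : 0 < n) : 0 < Rn ρ n := by
  have hn1 : (1 : ℝ) ≤ n := by exact_mod_cast hn
  exact div_pos (Real.Gamma_pos_of_pos (by positivity))
    (Real.Gamma_pos_of_pos (by have := div_nonneg (sub_nonneg.2 hn1) hρ.le; linarith))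

theorem natCast_le_mul_Rn_rpow {ρ : ℝ} (hρ : 1 ≤ ρ) {n : ℕ} (hn : 0 < n) :
    (n : ℝ) ≤ ρ * Rn ρ n ^ ρ := by
  have hρ0 : 0 < ρ := by linarith
  have hm : 0 < (n : ℝ) / ρ := by positivity
  have hs : ρ⁻¹ ≤ 1 := inv_le_one_of_one_le₀ hρ
  have hlow : ((n : ℝ) / ρ) ^ ρ⁻¹ ≤ Rn ρ n := by
    have hpos : 0 < (n : ℝ) / ρ + 1 - ρ⁻¹ := by linarith
    rw [Rn_eq_Gamma_div_Gamma, le_div_iff₀ (Real.Gamma_pos_of_pos hpos)]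
    exact Real.rpow_mul_Gamma_add_one_sub_le hm (by positivity) hs
  rw [← div_le_iff₀' hρ0]
  exact (Real.rpow_inv_le_iff_of_pos hm.le (Rn_pos hρ0 hn).le hρ0).1 hlow

theorem mul_Rn_rpow_le {ρ : ℝ} (hρ : 1 ≤ ρ) {n : ℕ} (hn : 0 < n) :
    ρ * Rn ρ n ^ ρ ≤ n + ρ - 1 := by
  have hρ0 : 0 < ρ := by linarith
  have hm : 0 < (n : ℝ) / ρ := by positivity
  have hs : ρ⁻¹ ≤ 1 := inv_le_one_of_one_le₀ hρ
  have hpos : 0 < (n : ℝ) / ρ + 1 - ρ⁻¹ := by linarith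
  have hup : Rn ρ n ≤ ((n : ℝ) / ρ + 1 - ρ⁻¹) ^ ρ⁻¹ := by
    rw [Rn_eq_Gamma_div_Gamma, div_le_iff₀ (Real.Gamma_pos_of_pos hpos)]
    simpa only [sub_add_cancel] using
      Real.Gamma_add_le_rpow_mul_Gamma hpos (s := ρ⁻¹) (by positivity) hs
  have h := (Real.le_rpow_inv_iff_of_pos (Rn_pos hρ0 hn).le hpos.le hρ0).1 hup
  calc ρ * Rn ρ n ^ ρ ≤ ρ * ((n : ℝ) / ρ + 1 - ρ⁻¹) := by gcongr
    _ = n + ρ - 1 := by field_simp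

theorem norm_J1 {ρ : ℝ} (hρ : 0 < ρ) {n : ℕ} (hn : 0 < n) {z : ℂ} (hz : z ≠ 0) :
    ‖J1 ρ n z‖ = Real.exp (Rn ρ n ^ ρ * (‖z‖ ^ ρ * Real.cos (ρ * z.arg)) - n * Real.log ‖z‖) *
      Real.Gamma (1 + n / ρ) / (Rn ρ n ^ ρ) ^ ((n : ℝ) / ρ) := by
  have hR := Rn_pos hρ hn
  rw [J1, norm_div, norm_mul, norm_mul, Complex.norm_exp, Complex.norm_real, norm_pow, norm_pow,
    Complex.norm_real, Real.norm_eq_abs, Real.norm_eq_abs, abs_of_pos hR,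
    abs_of_pos (Real.Gamma_pos_of_pos (by positivity)), re_ofReal_mul, cpow_ofReal_re,
    Real.exp_sub, ← Real.rpow_mul hR.le, mul_div_cancel₀ _ hρ.ne', Real.rpow_natCast,
    ← Real.log_pow, Real.exp_log (pow_pos (norm_pos_iff.2 hz) n), mul_comm z.arg]
  ring

theorem stmt12_general (ρ : ℝ) (hρ : 1 < ρ) (δ₂ δ₃ h : ℝ) (hδ₃ : 0 < δ₃) (hh : 0 < h) :
    ∃ C₁ : ℝ, 0 < C₁ ∧ ∃ N : ℕ, ∀ n ≥ N, ∀ z : ℂ,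
      ((0 < ‖z‖ ∧ ‖z‖ ≤ 1 ∧ δ₂ ≤ ‖z - 1‖ ∧
          |z.arg| ≤ π / (2 * ρ) - δ₃ ∧
          0 ≤ ‖z‖ ^ ρ * Real.cos (ρ * z.arg) - 1 - ρ * Real.log ‖z‖) ∨
       (1 ≤ ‖z‖ ∧ |z.arg| ≤ π / (2 * ρ) - δ₃ ∧
          h ≤ ‖z‖ ^ ρ * Real.cos (ρ * z.arg) - 1 - ρ * Real.log ‖z‖)) →
      C₁ * Real.sqrt ((n : ℝ) / ρ) ≤ ‖J1 ρ n z‖ := by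
  have hρ0 : 0 < ρ := by linarith
  refine ⟨(Real.exp 1)⁻¹, by positivity, ⌈ρ⌉₊, fun n hn z hz => ?_⟩
  have hρn : ρ ≤ n := Nat.ceil_le.1 hn
  have hn0 : 0 < n := by exact_mod_cast hρ0.trans_le hρn
  obtain ⟨hr, harg, hg⟩ : 0 < ‖z‖ ∧ |z.arg| ≤ π / (2 * ρ) - δ₃ ∧
      1 ≤ ‖z‖ ^ ρ * Real.cos (ρ * z.arg) - ρ * Real.log ‖z‖ := by
    rcases hz with ⟨hr, -, -, harg, hg⟩ | ⟨hr, harg, hg⟩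
    · exact ⟨hr, harg, by linarith⟩
    · exact ⟨by linarith, harg, by linarith⟩
  have hcos : 0 ≤ Real.cos (ρ * z.arg) := Real.cos_mul_nonneg_of_abs_le hρ0 (by linarith)
  have hexp := sub_one_le_mul_sub_mul hρ.le n.cast_nonneg (natCast_le_mul_Rn_rpow hρ.le hn0)
    (mul_Rn_rpow_le hρ.le hn0) (mul_nonneg (by positivity) hcos) hg
  rw [norm_J1 hρ0 hn0 (norm_pos_iff.1 hr)]
  exact Real.inv_exp_one_mul_sqrt_le_exp_mul_Gamma_div_rpow ((one_le_div hρ0).2 hρn)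
    (Real.rpow_pos_of_pos (Rn_pos hρ0 hn0) ρ) hexp

theorem stmt12 (ρ : ℝ) (hρ : 1 < ρ) (δ₂ δ₃ h : ℝ) (hδ₂ : 0 < δ₂) (hδ₃ : 0 < δ₃) (hh : 0 < h) :
    ∃ C₁ : ℝ, 0 < C₁ ∧ ∃ N : ℕ, ∀ n ≥ N, ∀ z : ℂ,
      ((0 < ‖z‖ ∧ ‖z‖ ≤ 1 ∧ δ₂ ≤ ‖z - 1‖ ∧
          |z.arg| ≤ π / (2 * ρ) - δ₃ ∧
          0 ≤ ‖z‖ ^ ρ * Real.cos (ρ * z.arg) - 1 - ρ * Real.log ‖z‖) ∨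
       (1 ≤ ‖z‖ ∧ |z.arg| ≤ π / (2 * ρ) - δ₃ ∧
          h ≤ ‖z‖ ^ ρ * Real.cos (ρ * z.arg) - 1 - ρ * Real.log ‖z‖)) →
      C₁ * Real.sqrt ((n : ℝ) / ρ) ≤ ‖J1 ρ n z‖ :=
  stmt12_general ρ hρ δ₂ δ₃ h hδ₃ hh
end

section
/- Let ρ > 1, δ₃ > 0, h > 0, and define J₂'(n,z) = Γ(1+n/ρ)/(R_n^{n+1} z^{n+1}). Then sup over z ∈ Ω₃ of |J₂'(n,z)| tends to 0 as n → ∞, where Ω₃ = {z = re^{iφ} : r ≥ e^{−1/ρ} + h, |φ| ≥ π/(2ρ) + δ₃}. -/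
open Complex Real Filter Topology

/-- `J₂·(n,z) = Γ(1+n/ρ)/(R_n^{n+1} z^{n+1})`. -/
noncomputable def J2 (ρ : ℝ) (n : ℕ) (z : ℂ) : ℂ :=
  (Real.Gamma (1 + (n : ℝ) / ρ) : ℂ) / ((Rn ρ n : ℂ) ^ (n + 1) * z ^ (n + 1))

/-!
Log-convexity of `Γ` gives Wendel's inequality `Γ(x + s) ≤ x^s Γ(x)` for `x > 0`, `s ∈ [0, 1]`.
With `s = 1 - 1/ρ` it yields `R_n ≥ (n/ρ)^{1/ρ}`, so for `|z| ≥ r` we get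
`|J₂'(n, z)| ≤ b_n := Γ(1 + n/ρ) / ((n/ρ)^{1/ρ} r)^{n+1}`. With `s = 1/ρ` it gives
`b_{n+1} ≤ c_n b_n`, where `c_n = ((ρ + n)/(n + 1))^{1/ρ} ((n/(n + 1))^{n+1})^{1/ρ} / r`
tends to `e^{-1/ρ}/r`. For `r = e^{-1/ρ} + h` this limit is `< 1`, so `b_n → 0` by the ratio test.
-/

theorem Real.Gamma_add_le_rpow_mul_Gamma_s14 {x s : ℝ} (hx : 0 < x) (hs₀ : 0 ≤ s) (hs₁ : s ≤ 1) :
    Gamma (x + s) ≤ x ^ s * Gamma x := by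
  have hΓ := Gamma_pos_of_pos hx
  have hconv := convexOn_log_Gamma.2 (Set.mem_Ioi.2 hx) (Set.mem_Ioi.2 (by linarith : 0 < x + 1))
    (sub_nonneg.2 hs₁) hs₀ (sub_add_cancel 1 s)
  simp only [smul_eq_mul, Function.comp_apply, Gamma_add_one hx.ne',
    log_mul hx.ne' hΓ.ne', show (1 - s) * x + s * (x + 1) = x + s by ring] at hconv
  rw [← log_le_log_iff (Gamma_pos_of_pos (by linarith)) (by positivity),
    log_mul (by positivity) hΓ.ne', log_rpow hx]
  linarith

theorem tendsto_zero_of_succ_le_mul {b c : ℕ → ℝ} {L : ℝ} (hL : L < 1)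
    (hc : Tendsto c atTop (𝓝 L)) (hb₀ : ∀ n, 0 ≤ b n) (hb : ∀ᶠ n in atTop, b (n + 1) ≤ c n * b n) :
    Tendsto b atTop (𝓝 0) := by
  obtain ⟨r, hLr, hr⟩ := exists_between hL
  refine (summable_of_ratio_norm_eventually_le hr ?_).tendsto_atTop_zero
  filter_upwards [hb, hc.eventually_le_const hLr] with n hbn hcn
  simp only [norm_of_nonneg (hb₀ _)]
  exact hbn.trans (mul_le_mul_of_nonneg_right hcn (hb₀ n))

theorem rpow_le_Rn {ρ : ℝ} (hρ : 1 ≤ ρ) {n : ℕ} (hn : n ≠ 0) :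
    ((n : ℝ) / ρ) ^ (1 / ρ) ≤ Rn ρ n := by
  have hx : 0 < (n : ℝ) / ρ := by positivity
  have hs : 1 / ρ ≤ 1 := by rw [div_le_one (by linarith)]; exact hρ
  have hshift : (n : ℝ) / ρ + (1 - 1 / ρ) = 1 + ((n : ℝ) - 1) / ρ := by ring
  have hΓ := Gamma_add_le_rpow_mul_Gamma_s14 hx (sub_nonneg.2 hs) (sub_le_self 1 (by positivity))
  have hpos : 0 < Real.Gamma (1 + ((n : ℝ) - 1) / ρ) :=
    hshift ▸ Gamma_pos_of_pos (by linarith)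
  rw [hshift] at hΓ
  rw [Rn, le_div_iff₀ hpos, add_comm 1 ((n : ℝ) / ρ), Gamma_add_one hx.ne']
  calc ((n : ℝ) / ρ) ^ (1 / ρ) * Real.Gamma (1 + ((n : ℝ) - 1) / ρ)
      ≤ ((n : ℝ) / ρ) ^ (1 / ρ) * (((n : ℝ) / ρ) ^ (1 - 1 / ρ) * Real.Gamma ((n : ℝ) / ρ)) := by
        gcongr
    _ = (n : ℝ) / ρ * Real.Gamma ((n : ℝ) / ρ) := by
      rw [← mul_assoc, ← rpow_add hx]; norm_num

noncomputable def j2Bound (ρ r : ℝ) (n : ℕ) : ℝ :=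
  Real.Gamma (1 + (n : ℝ) / ρ) / (((n : ℝ) / ρ) ^ (1 / ρ) * r) ^ (n + 1)

noncomputable def j2BoundRatio (ρ r : ℝ) (n : ℕ) : ℝ :=
  ((ρ + n) / (n + 1)) ^ (1 / ρ) * (((n : ℝ) / (n + 1)) ^ (n + 1)) ^ (1 / ρ) / r

theorem norm_J2_le_j2Bound {ρ r : ℝ} (hρ : 1 ≤ ρ) (hr : 0 < r) {n : ℕ} (hn : n ≠ 0) {z : ℂ}
    (hz : r ≤ ‖z‖) : ‖J2 ρ n z‖ ≤ j2Bound ρ r n := by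
  have hΓ : 0 < Real.Gamma (1 + (n : ℝ) / ρ) := Real.Gamma_pos_of_pos (by positivity)
  have hR := rpow_le_Rn hρ hn
  have hRn : 0 ≤ Rn ρ n := (rpow_nonneg (by positivity) _).trans hR
  rw [J2, j2Bound, norm_div, norm_mul, norm_pow, norm_pow, ← mul_pow, norm_real,
    norm_of_nonneg hΓ.le, norm_real, norm_of_nonneg hRn]
  gcongr

theorem j2Bound_nonneg {ρ r : ℝ} (hρ : 0 < ρ) (hr : 0 ≤ r) (n : ℕ) : 0 ≤ j2Bound ρ r n := by
  have hΓ : 0 < Real.Gamma (1 + (n : ℝ) / ρ) := Real.Gamma_pos_of_pos (by positivity)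
  unfold j2Bound
  positivity

theorem tendsto_j2BoundRatio (ρ r : ℝ) :
    Tendsto (j2BoundRatio ρ r) atTop (𝓝 (rexp (-(1 / ρ)) / r)) := by
  have h₁ : Tendsto (fun n : ℕ => (ρ + n) / (n + 1)) atTop (𝓝 1) := by
    simpa only [one_mul, div_one, add_comm (1 : ℝ)] using
      tendsto_add_mul_div_add_mul_atTop_nhds ρ 1 1 one_ne_zero
  have h₂ : Tendsto (fun n : ℕ => ((n : ℝ) / (n + 1)) ^ (n + 1)) atTop (𝓝 (rexp (-1))) := by
    refine ((Real.tendsto_one_add_div_pow_exp (-1)).comp (tendsto_add_atTop_nat 1)).congr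
      fun n => ?_
    have : (n : ℝ) + 1 ≠ 0 := by positivity
    simp only [Function.comp_apply, Nat.cast_add_one]
    congr 1
    field_simp
    ring
  have h := ((h₁.rpow_const (p := 1 / ρ) (Or.inl one_ne_zero)).mul
    (h₂.rpow_const (p := 1 / ρ) (Or.inl (Real.exp_pos _).ne'))).div_const r
  rwa [one_rpow, one_mul, ← Real.exp_mul, neg_one_mul] at h

theorem j2Bound_succ_le {ρ r : ℝ} (hρ : 1 ≤ ρ) (hr : 0 < r) {n : ℕ} (hn : n ≠ 0) :
    j2Bound ρ r (n + 1) ≤ j2BoundRatio ρ r n * j2Bound ρ r n := by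
  have hρ₀ : 0 < ρ := by linarith
  set x : ℝ := (n : ℝ) / ρ with hx_def
  set s : ℝ := 1 / ρ with hs_def
  have hx : 0 < x := by positivity
  have hs : 0 < s := by positivity
  have hs₁ : s ≤ 1 := by rw [hs_def, div_le_one hρ₀]; exact hρ
  have hratio : j2BoundRatio ρ r n
      = (1 + x) ^ s / (x + s) ^ s * (x ^ s / (x + s) ^ s) ^ (n + 1) / r := by
    have h₁ : (ρ + n) / (n + 1) = (1 + x) / (x + s) := by rw [hx_def, hs_def]; field_simp
    have h₂ : (n : ℝ) / (n + 1) = x / (x + s) := by rw [hx_def, hs_def]; field_simp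
    rw [j2BoundRatio, h₁, h₂, ← rpow_pow_comm (by positivity), div_rpow (by positivity)
      (by positivity), div_rpow (by positivity) (by positivity)]
  have hsucc : j2Bound ρ r (n + 1)
      = Real.Gamma ((1 + x) + s) / ((x + s) ^ s * r) ^ (n + 2) := by
    rw [j2Bound, Nat.cast_add_one, add_div, ← add_assoc]
  calc j2Bound ρ r (n + 1)
      ≤ (1 + x) ^ s * Real.Gamma (1 + x) / ((x + s) ^ s * r) ^ (n + 2) := by
        rw [hsucc]; gcongr; exact Real.Gamma_add_le_rpow_mul_Gamma_s14 (by positivity) hs.le hs₁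
    _ = j2BoundRatio ρ r n * j2Bound ρ r n := by
        have hB : 0 < (x + s) ^ s := by positivity
        have hC : 0 < x ^ s := by positivity
        rw [hratio, j2Bound, ← hx_def, ← hs_def, div_pow, mul_pow, mul_pow]
        field_simp
        ring

theorem tendsto_j2Bound_zero {ρ r : ℝ} (hρ : 1 ≤ ρ) (hr : rexp (-(1 / ρ)) < r) :
    Tendsto (j2Bound ρ r) atTop (𝓝 0) := by
  have hr₀ : 0 < r := (Real.exp_pos _).trans hr
  refine tendsto_zero_of_succ_le_mul ((div_lt_one hr₀).2 hr) (tendsto_j2BoundRatio ρ r)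
    (j2Bound_nonneg (by linarith) hr₀.le) ?_
  filter_upwards [eventually_ne_atTop 0] with n hn using j2Bound_succ_le hρ hr₀ hn

theorem stmt14_general (ρ : ℝ) (hρ : 1 < ρ) (δ₃ h : ℝ) (hh : 0 < h) :
    ∀ ε > (0 : ℝ), ∃ N : ℕ, ∀ n ≥ N, ∀ z : ℂ,
      Real.exp (-(1 / ρ)) + h ≤ ‖z‖ → π / (2 * ρ) + δ₃ ≤ |z.arg| →
      ‖J2 ρ n z‖ < ε := by
  intro ε hε
  have hr : rexp (-(1 / ρ)) < rexp (-(1 / ρ)) + h := lt_add_of_pos_right _ hh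
  obtain ⟨N, hN⟩ := eventually_atTop.1
    (((tendsto_j2Bound_zero hρ.le hr).eventually (gt_mem_nhds hε)).and (eventually_ne_atTop 0))
  exact ⟨N, fun n hn z hz _ =>
    (norm_J2_le_j2Bound hρ.le ((Real.exp_pos _).trans hr) (hN n hn).2 hz).trans_lt (hN n hn).1⟩

theorem stmt14 (ρ : ℝ) (hρ : 1 < ρ) (δ₃ h : ℝ) (hδ₃ : 0 < δ₃) (hh : 0 < h) :
    ∀ ε > (0 : ℝ), ∃ N : ℕ, ∀ n ≥ N, ∀ z : ℂ,
      Real.exp (-(1 / ρ)) + h ≤ ‖z‖ → π / (2 * ρ) + δ₃ ≤ |z.arg| →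
      ‖J2 ρ n z‖ < ε :=
  stmt14_general ρ hρ δ₃ h hh
end

section
/- Let ρ > 1 and set R_n = Γ(1+n/ρ)/Γ(1+(n−1)/ρ). Then there exist a constant C > 0 and N such that for all n ≥ N: |R_n/(n/ρ)^{1/ρ} − (1 + (ρ−1)/(2ρn))| ≤ C/n²; that is, R_n = (n/ρ)^{1/ρ}(1 + (ρ−1)/(2ρn) + O(1/n²)) as n → ∞. -/
/-!
Put `s = 1/ρ` and `x = n/ρ`, so that `R_n = Γ(x+1)/Γ(x+1-s)`, and let
`W(s,t) = wendelDefect s t = log (Γ(t+s) / (Γ(t) t^s))`. Log-convexity of `Γ` traps `W(s,t)`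
between `-s(1-s)/t` and `0` (Wendel's inequality), so `W(s,t+n) → 0`. The functional equation
gives `W(s,t+1) - W(s,t) = log(1+s/t) - s log(1+1/t) = s(1-s)/(2t²) + O(1/t³)`, and summing
these steps from `t` to infinity yields `W(s,t) = -s(1-s)/(2t) + O(1/t²)`. Exponentiating at
`t = x+1-s` gives the expansion of `R_n / x^s`.
-/

open Complex Real Filter Topology

lemma abs_le_of_abs_sub_succ_le_sub_succ {a b : ℕ → ℝ} (ha : Tendsto a atTop (𝓝 0))
    (hb : ∀ n, 0 ≤ b n) (hab : ∀ n, |a n - a (n + 1)| ≤ b n - b (n + 1)) : |a 0| ≤ b 0 := by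
  have partial_sum : ∀ N, |a 0 - a N| ≤ b 0 - b N := by
    intro N
    induction N with
    | zero => simp
    | succ N ih => linarith [abs_sub_le (a 0) (a N) (a (N + 1)), hab N]
  have hlim : Tendsto (fun N => |a 0 - a N|) atTop (𝓝 |a 0 - 0|) :=
    (tendsto_const_nhds.sub ha).abs
  rw [sub_zero] at hlim
  exact le_of_tendsto' hlim fun N => (partial_sum N).trans (by linarith [hb N])

lemma abs_log_one_add_sub_add_sq_le {x : ℝ} (hx : |x| ≤ 1 / 2) :
    |Real.log (1 + x) - x + x ^ 2 / 2| ≤ 2 * |x| ^ 3 := by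
  have h := abs_log_sub_add_sum_range_le (x := -x) (by rw [abs_neg]; linarith) 2
  rw [show ∑ i ∈ Finset.range 2, (-x) ^ (i + 1) / (i + 1 : ℝ) + Real.log (1 - -x) =
      Real.log (1 + x) - x + x ^ 2 / 2 by simp [Finset.sum_range_succ]; ring, abs_neg] at h
  calc _ ≤ |x| ^ 3 / (1 - |x|) := h
    _ ≤ |x| ^ 3 / (1 / 2) := by gcongr; linarith
    _ = 2 * |x| ^ 3 := by ring

lemma abs_log_one_add_sub_le {u : ℝ} (hu : 0 ≤ u) : |Real.log (1 + u) - u| ≤ u ^ 2 := by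
  have hpos : 0 < 1 + u := by linarith
  have upper := log_le_sub_one_of_pos hpos
  have lower := one_sub_inv_le_log_of_pos hpos
  have key : u - u ^ 2 ≤ 1 - (1 + u)⁻¹ := by
    rw [show 1 - (1 + u)⁻¹ = u / (1 + u) by field_simp; ring, le_div_iff₀ hpos]
    nlinarith [mul_nonneg hu (sq_nonneg u)]
  rw [abs_le]; constructor <;> nlinarith

lemma one_div_pow_three_le_one_div_sq_sub {t : ℝ} (ht : 2 ≤ t) :
    1 / t ^ 3 ≤ 1 / t ^ 2 - 1 / (t + 1) ^ 2 := by
  have ht0 : 0 < t := by linarith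
  rw [div_sub_div _ _ (by positivity) (by positivity), div_le_div_iff₀ (by positivity) (by positivity)]
  nlinarith [mul_pos (pow_pos ht0 3) (by nlinarith : (0:ℝ) < t ^ 2 - t - 1)]

noncomputable def wendelDefect (s t : ℝ) : ℝ :=
  Real.log (Real.Gamma (t + s)) - Real.log (Real.Gamma t) - s * Real.log t

lemma log_Gamma_add_one {t : ℝ} (ht : 0 < t) :
    Real.log (Real.Gamma (t + 1)) = Real.log t + Real.log (Real.Gamma t) := by
  rw [Real.Gamma_add_one ht.ne', Real.log_mul ht.ne' (Real.Gamma_pos_of_pos ht).ne']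

lemma wendelDefect_nonpos {s t : ℝ} (hs0 : 0 ≤ s) (hs1 : s ≤ 1) (ht : 0 < t) :
    wendelDefect s t ≤ 0 := by
  have h := Real.convexOn_log_Gamma.2 (Set.mem_Ioi.mpr ht) (Set.mem_Ioi.mpr (by linarith : 0 < t + 1))
    (sub_nonneg.mpr hs1) hs0 (by ring)
  simp only [smul_eq_mul, Function.comp_apply] at h
  rw [show (1 - s) * t + s * (t + 1) = t + s by ring, log_Gamma_add_one ht] at h
  unfold wendelDefect
  linarith

lemma neg_le_wendelDefect {s t : ℝ} (hs0 : 0 ≤ s) (hs1 : s ≤ 1) (ht : 0 < t) :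
    -(s * (1 - s) / t) ≤ wendelDefect s t := by
  have hts : 0 < t + s := by linarith
  have h := Real.convexOn_log_Gamma.2 (Set.mem_Ioi.mpr hts)
    (Set.mem_Ioi.mpr (by linarith : 0 < t + s + 1)) hs0 (sub_nonneg.mpr hs1) (by ring)
  simp only [smul_eq_mul, Function.comp_apply] at h
  rw [show s * (t + s) + (1 - s) * (t + s + 1) = t + 1 by ring, log_Gamma_add_one ht,
    log_Gamma_add_one hts] at h
  have hlog : Real.log (t + s) - Real.log t ≤ s / t := by
    rw [← Real.log_div hts.ne' ht.ne']
    refine (Real.log_le_sub_one_of_pos (by positivity)).trans_eq ?_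
    field_simp
    ring
  have : (1 - s) * (Real.log (t + s) - Real.log t) ≤ (1 - s) * (s / t) :=
    mul_le_mul_of_nonneg_left hlog (sub_nonneg.mpr hs1)
  unfold wendelDefect
  rw [show s * (1 - s) / t = (1 - s) * (s / t) by ring]
  linarith

lemma wendelDefect_add_one_sub {s t : ℝ} (ht : 0 < t) (hts : 0 < t + s) :
    wendelDefect s (t + 1) - wendelDefect s t =
      Real.log (1 + s / t) - s * Real.log (1 + 1 / t) := by
  have h1 : 1 + s / t = (t + s) / t := by field_simp
  have h2 : 1 + 1 / t = (t + 1) / t := by field_simp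
  unfold wendelDefect
  rw [show t + 1 + s = t + s + 1 by ring, log_Gamma_add_one hts, log_Gamma_add_one ht, h1, h2,
    Real.log_div hts.ne' ht.ne', Real.log_div (by linarith) ht.ne']
  ring

lemma abs_wendelDefect_step_le {s t : ℝ} (hs0 : 0 ≤ s) (hs1 : s ≤ 1) (ht : 2 ≤ t) :
    |(wendelDefect s (t + 1) + s * (1 - s) / (2 * (t + 1))) -
      (wendelDefect s t + s * (1 - s) / (2 * t))| ≤ 5 / t ^ 3 := by
  have ht0 : 0 < t := by linarith
  set E : ℝ → ℝ := fun x => Real.log (1 + x) - x + x ^ 2 / 2 with hE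
  have hEs : |E (s / t)| ≤ 2 * (s / t) ^ 3 := by
    have h := abs_log_one_add_sub_add_sq_le (x := s / t) (by
      rw [abs_of_nonneg (by positivity), div_le_iff₀ ht0]; linarith)
    rwa [abs_of_nonneg (by positivity : 0 ≤ s / t)] at h
  have hE1 : |E (1 / t)| ≤ 2 * (1 / t) ^ 3 := by
    have h := abs_log_one_add_sub_add_sq_le (x := 1 / t) (by
      rw [abs_of_nonneg (by positivity), div_le_iff₀ ht0]; linarith)
    rwa [abs_of_nonneg (by positivity : 0 ≤ 1 / t)] at h
  have hstep : (wendelDefect s (t + 1) + s * (1 - s) / (2 * (t + 1))) -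
      (wendelDefect s t + s * (1 - s) / (2 * t)) =
        E (s / t) - s * E (1 / t) + s * (1 - s) / (2 * t ^ 2 * (t + 1)) := by
    rw [show ∀ a b c d : ℝ, (a + b) - (c + d) = (a - c) + (b - d) by intros; ring,
      wendelDefect_add_one_sub ht0 (by linarith), hE]
    field_simp
    ring
  have hcorr : s * (1 - s) / (2 * t ^ 2 * (t + 1)) ≤ 1 / t ^ 3 := by
    rw [div_le_div_iff₀ (by positivity) (by positivity)]
    have hss : s * (1 - s) ≤ 1 := by nlinarith
    nlinarith [mul_le_mul_of_nonneg_right hss (pow_pos ht0 3).le, pow_pos ht0 2]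
  rw [hstep]
  calc |E (s / t) - s * E (1 / t) + s * (1 - s) / (2 * t ^ 2 * (t + 1))|
      ≤ |E (s / t)| + s * |E (1 / t)| + s * (1 - s) / (2 * t ^ 2 * (t + 1)) := by
        refine (abs_add_le _ _).trans (add_le_add ((abs_sub _ _).trans_eq ?_) ?_)
        · rw [abs_mul, abs_of_nonneg hs0]
        · rw [abs_of_nonneg (by have := sub_nonneg.mpr hs1; positivity)]
    _ ≤ 2 * (s / t) ^ 3 + 1 * (2 * (1 / t) ^ 3) + 1 / t ^ 3 := by gcongr
    _ ≤ 5 / t ^ 3 := by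
        rw [show 2 * (s / t) ^ 3 + 1 * (2 * (1 / t) ^ 3) + 1 / t ^ 3 = (2 * s ^ 3 + 3) / t ^ 3 by
          field_simp; ring]
        gcongr
        nlinarith [pow_le_one₀ hs0 hs1 (n := 3)]

lemma abs_wendelDefect_add_le_div {s t : ℝ} (hs0 : 0 ≤ s) (hs1 : s ≤ 1) (ht : 0 < t) :
    |wendelDefect s t + s * (1 - s) / (2 * t)| ≤ s * (1 - s) / (2 * t) := by
  have upper := wendelDefect_nonpos hs0 hs1 ht
  have lower := neg_le_wendelDefect hs0 hs1 ht
  rw [show s * (1 - s) / t = 2 * (s * (1 - s) / (2 * t)) by field_simp] at lower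
  rw [abs_le]; constructor <;> linarith

lemma abs_wendelDefect_add_le {s t : ℝ} (hs0 : 0 ≤ s) (hs1 : s ≤ 1) (ht : 2 ≤ t) :
    |wendelDefect s t + s * (1 - s) / (2 * t)| ≤ 5 / t ^ 2 := by
  have ht0 : 0 < t := by linarith
  set F : ℝ → ℝ := fun u => wendelDefect s u + s * (1 - s) / (2 * u)
  have hcast : ∀ n : ℕ, t + ((n + 1 : ℕ) : ℝ) = t + n + 1 := fun n => by push_cast; ring
  have hlim : Tendsto (fun u => s * (1 - s) / (2 * u)) atTop (𝓝 0) :=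
    tendsto_const_nhds.div_atTop (tendsto_id.const_mul_atTop two_pos)
  have hshift : Tendsto (fun n : ℕ => t + n) atTop atTop :=
    tendsto_atTop_add_const_left _ t tendsto_natCast_atTop_atTop
  have ha : Tendsto (fun n : ℕ => F (t + n)) atTop (𝓝 0) := by
    refine squeeze_zero_norm' ?_ (hlim.comp hshift)
    filter_upwards with n
    exact abs_wendelDefect_add_le_div hs0 hs1 (by positivity)
  have hab : ∀ n : ℕ, |F (t + n) - F (t + (n + 1 : ℕ))| ≤
      5 / (t + n) ^ 2 - 5 / (t + (n + 1 : ℕ)) ^ 2 := by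
    intro n
    have htn : 2 ≤ t + n := le_add_of_le_of_nonneg ht n.cast_nonneg
    rw [hcast, abs_sub_comm]
    refine (abs_wendelDefect_step_le hs0 hs1 htn).trans ?_
    have := one_div_pow_three_le_one_div_sq_sub htn
    calc 5 / (t + n) ^ 3 = 5 * (1 / (t + n) ^ 3) := by ring
      _ ≤ 5 * (1 / (t + n) ^ 2 - 1 / (t + n + 1) ^ 2) := by gcongr
      _ = _ := by ring
  simpa using abs_le_of_abs_sub_succ_le_sub_succ ha (fun n => by positivity) hab

lemma Gamma_div_Gamma_div_rpow_eq_exp {s x : ℝ} (hx : 0 < x) (hy : 0 < x + 1 - s) :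
    Real.Gamma (x + 1) / Real.Gamma (x + 1 - s) / x ^ s =
      Real.exp (wendelDefect s (x + 1 - s) + s * Real.log (1 + (1 - s) / x)) := by
  have hΓ₁ : 0 < Real.Gamma (x + 1) := Real.Gamma_pos_of_pos (by linarith)
  have hΓ₂ : 0 < Real.Gamma (x + 1 - s) := Real.Gamma_pos_of_pos hy
  rw [← Real.exp_log (by positivity : 0 < Real.Gamma (x + 1) / Real.Gamma (x + 1 - s) / x ^ s),
    show 1 + (1 - s) / x = (x + 1 - s) / x by field_simp; ring,
    Real.log_div (by positivity) (by positivity), Real.log_div hΓ₁.ne' hΓ₂.ne', Real.log_rpow hx,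
    Real.log_div hy.ne' hx.ne', wendelDefect, show x + 1 - s + s = x + 1 by ring]
  ring_nf

lemma abs_Gamma_div_Gamma_div_rpow_sub_le {s x : ℝ} (hs0 : 0 ≤ s) (hs1 : s ≤ 1) (hx : 8 ≤ x) :
    |Real.Gamma (x + 1) / Real.Gamma (x + 1 - s) / x ^ s - (1 + s * (1 - s) / (2 * x))| ≤
      8 / x ^ 2 := by
  have hx0 : 0 < x := by linarith
  have hs1' : 0 ≤ 1 - s := sub_nonneg.mpr hs1
  set y := x + 1 - s with hy
  have hxy : x ≤ y := by linarith
  set u := (1 - s) / x with hu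
  set c := s * (1 - s) / 2 with hc
  set L := wendelDefect s y + s * Real.log (1 + u) with hL
  have hW : |wendelDefect s y + c / y| ≤ 5 / x ^ 2 := by
    have h := abs_wendelDefect_add_le hs0 hs1 (t := y) (by linarith)
    rw [show s * (1 - s) / (2 * y) = c / y by rw [hc, div_div]] at h
    exact h.trans (by gcongr)
  have hlog : |s * (Real.log (1 + u) - u)| ≤ 1 / x ^ 2 := by
    rw [abs_mul, abs_of_nonneg hs0]
    calc s * |Real.log (1 + u) - u| ≤ 1 * u ^ 2 :=
          mul_le_mul hs1 (abs_log_one_add_sub_le (by positivity)) (abs_nonneg _) zero_le_one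
      _ ≤ 1 / x ^ 2 := by
          rw [one_mul, hu, div_pow]
          gcongr
          nlinarith
  have hshift : |c / x - c / y| ≤ 1 / x ^ 2 := by
    have hy0 : 0 < y := by linarith
    have hc0 : 0 ≤ c * (1 - s) := by rw [hc]; positivity
    rw [div_sub_div _ _ hx0.ne' hy0.ne', show c * y - x * c = c * (1 - s) by rw [hy]; ring,
      abs_of_nonneg (div_nonneg hc0 (mul_pos hx0 hy0).le),
      div_le_div_iff₀ (mul_pos hx0 hy0) (by positivity)]
    have hc1 : c * (1 - s) ≤ 1 := by rw [hc]; nlinarith [mul_nonneg hs0 hs1']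
    nlinarith [mul_le_mul_of_nonneg_right hc1 (sq_nonneg x), mul_le_mul_of_nonneg_left hxy hx0.le]
  have hLc : |L - c / x| ≤ 7 / x ^ 2 := by
    rw [show L - c / x = (wendelDefect s y + c / y) + s * (Real.log (1 + u) - u) + (c / x - c / y) by
      rw [hL, hu, hc]; field_simp; ring]
    calc _ ≤ 5 / x ^ 2 + 1 / x ^ 2 + 1 / x ^ 2 := by
          refine (abs_add_le _ _).trans (add_le_add ((abs_add_le _ _).trans ?_) hshift)
          exact add_le_add hW hlog
      _ = 7 / x ^ 2 := by ring
  have hL1 : |L| ≤ 1 / x := by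
    have hc8 : c / x ≤ 1 / (8 * x) := by
      rw [div_le_div_iff₀ hx0 (by positivity), hc]; nlinarith [sq_nonneg (2 * s - 1)]
    have h7 : 7 / x ^ 2 ≤ 7 / (8 * x) := by gcongr; nlinarith
    have hc0 : 0 ≤ c / x := by positivity
    have := abs_sub_abs_le_abs_sub L (c / x)
    rw [abs_of_nonneg hc0] at this
    calc |L| ≤ 7 / (8 * x) + 1 / (8 * x) := by linarith
      _ = 1 / x := by field_simp; norm_num
  have hexp := Real.abs_exp_sub_one_sub_id_le (hL1.trans (by rw [div_le_one hx0]; linarith))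
  have hL2 : L ^ 2 ≤ 1 / x ^ 2 := by
    rw [← sq_abs, show 1 / x ^ 2 = (1 / x) ^ 2 by ring]
    exact pow_le_pow_left₀ (abs_nonneg L) hL1 2
  rw [Gamma_div_Gamma_div_rpow_eq_exp hx0 (by linarith), ← hL,
    show s * (1 - s) / (2 * x) = c / x by rw [hc]; ring,
    show Real.exp L - (1 + c / x) = (Real.exp L - 1 - L) + (L - c / x) by ring]
  calc _ ≤ 1 / x ^ 2 + 7 / x ^ 2 := (abs_add_le _ _).trans (add_le_add (hexp.trans hL2) hLc)
    _ = 8 / x ^ 2 := by ring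

theorem stmt16 (ρ : ℝ) (hρ : 1 < ρ) :
    ∃ C : ℝ, 0 < C ∧ ∃ N : ℕ, ∀ n ≥ N,
      |Rn ρ n / ((n : ℝ) / ρ) ^ (1 / ρ : ℝ) - (1 + (ρ - 1) / (2 * ρ * n))| ≤ C / (n : ℝ) ^ 2 := by
  have hρ0 : 0 < ρ := by linarith
  refine ⟨8 * ρ ^ 2, by positivity, ⌈8 * ρ⌉₊, fun n hn => ?_⟩
  have hn : 8 * ρ ≤ n := Nat.ceil_le.mp hn
  have hn0 : (0 : ℝ) < n := by linarith
  have hx : 8 ≤ (n : ℝ) / ρ := by rwa [le_div_iff₀ hρ0]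
  have hs1 : 1 / ρ ≤ 1 := by rw [div_le_one hρ0]; linarith
  rw [Rn, show 1 + (n : ℝ) / ρ = n / ρ + 1 by ring,
    show 1 + ((n : ℝ) - 1) / ρ = n / ρ + 1 - 1 / ρ by ring,
    show (ρ - 1) / (2 * ρ * n) = 1 / ρ * (1 - 1 / ρ) / (2 * (n / ρ)) by field_simp,
    show 8 * ρ ^ 2 / (n : ℝ) ^ 2 = 8 / (n / ρ) ^ 2 by field_simp]
  exact abs_Gamma_div_Gamma_div_rpow_sub_le (by positivity) hs1 hx
end
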